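/- arXiv:2506.03291 — 2 statements merged into one kernel-verified Lean document; each statement's English description precedes it below -/
import Mathlib

section
/- Let q : [0,T] × ℝ² → ℝ^m be a smooth solution of ∂_t q + v^x(q) ∂_x q + v^y(q) ∂_y q = 0 where v^x, v^y are two of the components of q (so the Jacobians are v^x·Id and v^y·Id), with initial data q(0,·) = q₀. Then q(t, x) = q₀(x − t·v₀(x − t·v₀(x))) + O(t³) as t → 0, where v₀(x) := (v^x(q₀(x)), v^y(q₀(x))). -/
open Real Asymptotics

section Helpers

variable {E : Type*} [NormedAddCommGroup E] [NormedSpace ℝ E]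

private lemma adv_one_le_inf : ((⊤:ℕ∞) : WithTop ℕ∞) ≠ 0 := by
  simp

private lemma adv_step_lemma {F : ℝ → ℝ} (hF : Differentiable ℝ F)
    (h0 : F 0 = 0) {k : ℕ}
    (hO : (deriv F) =O[nhdsWithin 0 (Set.Ici 0)] fun t => t ^ k) :
    F =O[nhdsWithin 0 (Set.Ici 0)] fun t => t ^ (k+1) := by
  obtain ⟨C, hC⟩ := hO.bound
  rw [eventually_nhdsWithin_iff, Metric.eventually_nhds_iff] at hC
  obtain ⟨δ, hδ, hbound⟩ := hC
  set C' := max C 0 with hC'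
  have hC0 : 0 ≤ C' := le_max_right _ _
  apply IsBigO.of_bound C'
  rw [eventually_nhdsWithin_iff, Metric.eventually_nhds_iff]
  refine ⟨δ, hδ, fun t ht htI => ?_⟩
  have ht0 : (0:ℝ) ≤ t := htI
  have htδ : t < δ := by
    rw [Real.dist_eq, sub_zero, abs_of_nonneg ht0] at ht; exact ht
  have key : ∀ s ∈ Set.Icc (0:ℝ) t, ‖deriv F s‖ ≤ C' * t ^ k := by
    intro s hs
    have hs0 := hs.1
    have hst := hs.2
    have hsδ : dist s 0 < δ := by
      rw [Real.dist_eq, sub_zero, abs_of_nonneg hs0]; linarith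
    have hb := hbound hsδ hs0
    calc ‖deriv F s‖ ≤ C * ‖s ^ k‖ := hb
      _ ≤ C' * ‖s ^ k‖ :=
          mul_le_mul_of_nonneg_right (le_max_left _ _) (norm_nonneg _)
      _ ≤ C' * t ^ k := by
          apply mul_le_mul_of_nonneg_left _ hC0
          rw [Real.norm_eq_abs, abs_of_nonneg (pow_nonneg hs0 _)]
          exact pow_le_pow_left₀ hs0 hst k
  have hmvt := norm_image_sub_le_of_norm_deriv_le_segment'
    (f := F) (f' := deriv F) (C := C' * t ^ k)
    (fun s _ => (hF s).hasDerivAt.hasDerivWithinAt)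
    (fun s hs => key s (Set.Ico_subset_Icc_self hs)) t (Set.right_mem_Icc.2 ht0)
  rw [h0, sub_zero] at hmvt
  calc ‖F t‖ ≤ C' * t ^ k * (t - 0) := hmvt
    _ = C' * ‖t ^ (k+1)‖ := by
        rw [Real.norm_eq_abs, abs_of_nonneg (pow_nonneg ht0 _), sub_zero, pow_succ]; ring

private lemma adv_third_order_lemma {φ : ℝ → ℝ} (hφ : ContDiff ℝ (⊤ : ℕ∞) φ)
    (h0 : φ 0 = 0) (h1 : deriv φ 0 = 0) (h2 : deriv (deriv φ) 0 = 0) :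
    φ =O[nhdsWithin 0 (Set.Ici 0)] fun t : ℝ => t ^ 3 := by
  have hd1 : ContDiff ℝ (⊤ : ℕ∞) (deriv φ) := (contDiff_infty_iff_deriv.1 hφ).2
  have hd2 : ContDiff ℝ (⊤ : ℕ∞) (deriv (deriv φ)) := (contDiff_infty_iff_deriv.1 hd1).2
  have hO1 : (deriv (deriv φ)) =O[nhdsWithin 0 (Set.Ici 0)] fun t : ℝ => t ^ 1 := by
    have h := (hd2.differentiable adv_one_le_inf 0).isBigO_sub
    simp only [h2, sub_zero, pow_one] at h ⊢
    exact h.mono nhdsWithin_le_nhds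
  have hO2 := adv_step_lemma (hd1.differentiable adv_one_le_inf) h1 hO1
  exact adv_step_lemma (hφ.differentiable adv_one_le_inf) h0 hO2

private lemma adv_fin2_decomp (v : Fin 2 → ℝ) :
    v = v 0 • (Pi.single 0 1 : Fin 2 → ℝ) + v 1 • (Pi.single 1 1 : Fin 2 → ℝ) := by
  funext j
  fin_cases j <;> simp [Pi.single_apply]

private lemma adv_clm_fin2 (L : (Fin 2 → ℝ) →L[ℝ] ℝ) (v : Fin 2 → ℝ) :
    L v = v 0 * L (Pi.single 0 1) + v 1 * L (Pi.single 1 1) := by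
  conv_lhs => rw [adv_fin2_decomp v]
  rw [map_add, L.map_smul, L.map_smul]
  simp [smul_eq_mul]

private lemma adv_clm_fin2bi (B : (Fin 2 → ℝ) →L[ℝ] (Fin 2 → ℝ) →L[ℝ] ℝ) (v u : Fin 2 → ℝ) :
    B v u = v 0 * u 0 * B (Pi.single 0 1) (Pi.single 0 1)
      + v 0 * u 1 * B (Pi.single 0 1) (Pi.single 1 1)
      + v 1 * u 0 * B (Pi.single 1 1) (Pi.single 0 1)
      + v 1 * u 1 * B (Pi.single 1 1) (Pi.single 1 1) := by
  have h1 := adv_fin2_decomp v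
  have h2 := adv_fin2_decomp u
  conv_lhs => rw [h1, h2]
  simp only [map_add, map_smul, ContinuousLinearMap.add_apply, ContinuousLinearMap.smul_apply,
    smul_eq_mul]
  ring

private lemma adv_fderiv_curry {f : ℝ × E → ℝ} (hf : ContDiff ℝ (⊤:ℕ∞) f) (t : ℝ) (x : E) :
    fderiv ℝ (fun y => f (t, y)) x
      = (fderiv ℝ f (t, x)).comp (ContinuousLinearMap.inr ℝ ℝ E) :=
  (((hf.differentiable adv_one_le_inf) (t, x)).hasFDerivAt.comp x
    (hasFDerivAt_prodMk_right t x)).fderiv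

private lemma adv_deriv_curry {f : ℝ × E → ℝ} (hf : ContDiff ℝ (⊤:ℕ∞) f) (t : ℝ) (y : E) :
    deriv (fun s => f (s, y)) t = fderiv ℝ f (t, y) (1, 0) :=
  (((hf.differentiable adv_one_le_inf) (t, y)).hasFDerivAt.comp_hasDerivAt t
    (HasDerivAt.prodMk (hasDerivAt_id t) (hasDerivAt_const t y))).deriv

private lemma adv_swap_lemma {f : ℝ × E → ℝ} (hf : ContDiff ℝ (⊤:ℕ∞) f) (x : E) (w : E) :
    HasDerivAt (fun t => fderiv ℝ f (t, x) (0, w))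
      (fderiv ℝ (fun y => fderiv ℝ f (0, y) (1, 0)) x w) 0 := by
  have hf1 : ContDiff ℝ (⊤:ℕ∞) (fderiv ℝ f) := hf.fderiv_right (by norm_num)
  have hS : HasFDerivAt (fderiv ℝ f) (fderiv ℝ (fderiv ℝ f) (0, x)) (0, x) :=
    ((hf1.differentiable adv_one_le_inf) (0, x)).hasFDerivAt
  set S := fderiv ℝ (fderiv ℝ f) (0, x) with hSdef
  have hcurve : HasDerivAt (fun t : ℝ => (t, x)) ((1:ℝ), (0:E)) 0 :=
    HasDerivAt.prodMk (hasDerivAt_id (0:ℝ)) (hasDerivAt_const (0:ℝ) x)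
  have hL : HasDerivAt (fun t => fderiv ℝ f (t, x)) (S ((1:ℝ), (0:E))) 0 :=
    hS.comp_hasDerivAt 0 hcurve
  have hLa : HasDerivAt (fun t => fderiv ℝ f (t, x) (0, w)) (S (1, 0) (0, w)) 0 := by
    have := hL.clm_apply (hasDerivAt_const 0 ((0:ℝ), w))
    simpa using this
  have hA' : HasFDerivAt (fun p : ℝ × E => fderiv ℝ f p ((1:ℝ), (0:E)))
      (S.flip (1, 0)) (0, x) := by
    have := hS.clm_apply (hasFDerivAt_const ((1:ℝ), (0:E)) ((0:ℝ), x))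
    simpa using this
  have hA : HasFDerivAt (fun y => fderiv ℝ f (0, y) ((1:ℝ), (0:E)))
      ((S.flip (1, 0)).comp (ContinuousLinearMap.inr ℝ ℝ E)) x :=
    hA'.comp x (hasFDerivAt_prodMk_right 0 x)
  have hval : fderiv ℝ (fun y => fderiv ℝ f (0, y) ((1:ℝ), (0:E))) x w = S (0, w) (1, 0) := by
    rw [hA.fderiv]; rfl
  have hsymm : S (1, 0) (0, w) = S (0, w) (1, 0) :=
    second_derivative_symmetric
      (fun y => ((hf.differentiable adv_one_le_inf) y).hasFDerivAt) hS _ _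
  rw [hval, ← hsymm]
  exact hLa

private lemma adv_fderiv_curry' {f : ℝ → E → ℝ}
    (hf : ContDiff ℝ (⊤:ℕ∞) (fun p : ℝ × E => f p.1 p.2)) (t : ℝ) (x : E) (w : E) :
    fderiv ℝ (fun y => f t y) x w = fderiv ℝ (fun p : ℝ × E => f p.1 p.2) (t, x) ((0:ℝ), w) := by
  rw [show (fun y => f t y) = (fun p : ℝ × E => f p.1 p.2) ∘ (fun y => (t, y)) from rfl]
  rw [(((hf.differentiable adv_one_le_inf) (t, x)).hasFDerivAt.comp x
    (hasFDerivAt_prodMk_right t x)).fderiv]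
  rfl

private lemma adv_deriv_curry' {f : ℝ → E → ℝ}
    (hf : ContDiff ℝ (⊤:ℕ∞) (fun p : ℝ × E => f p.1 p.2)) (t : ℝ) (y : E) :
    deriv (fun s => f s y) t
      = fderiv ℝ (fun p : ℝ × E => f p.1 p.2) (t, y) ((1:ℝ), (0:E)) := by
  rw [show (fun s => f s y) = (fun p : ℝ × E => f p.1 p.2) ∘ (fun s => (s, y)) from rfl]
  exact (((hf.differentiable adv_one_le_inf) (t, y)).hasFDerivAt.comp_hasDerivAt t
    (HasDerivAt.prodMk (hasDerivAt_id t) (hasDerivAt_const t y))).deriv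

private lemma adv_swap_lemma' {f : ℝ → E → ℝ}
    (hf : ContDiff ℝ (⊤:ℕ∞) (fun p : ℝ × E => f p.1 p.2)) (x w : E) :
    HasDerivAt (fun t => fderiv ℝ (fun y => f t y) x w)
      (fderiv ℝ (fun y => deriv (fun s => f s y) 0) x w) 0 := by
  have h1 : (fun t => fderiv ℝ (fun y => f t y) x w)
      = fun t => fderiv ℝ (fun p : ℝ × E => f p.1 p.2) (t, x) ((0:ℝ), w) :=
    funext fun t => adv_fderiv_curry' hf t x w
  have h2 : (fun y => deriv (fun s => f s y) 0)
      = fun y => fderiv ℝ (fun p : ℝ × E => f p.1 p.2) (0, y) ((1:ℝ), (0:E)) :=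
    funext fun y => adv_deriv_curry' hf 0 y
  rw [h1, h2]
  exact adv_swap_lemma hf x w

end Helpers

theorem advection_evolution_third_order
    (T : ℝ) (hT : 0 < T) (m : ℕ) (ix iy : Fin m)
    (q : ℝ → (Fin 2 → ℝ) → (Fin m → ℝ))
    (hq : ContDiff ℝ (⊤ : ℕ∞) (fun p : ℝ × (Fin 2 → ℝ) => q p.1 p.2))
    (hpde : ∀ t ∈ Set.Icc 0 T, ∀ x : Fin 2 → ℝ, ∀ i : Fin m,
      deriv (fun s => q s x i) t +
        q t x ix * fderiv ℝ (fun y => q t y i) x (Pi.single 0 1) +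
        q t x iy * fderiv ℝ (fun y => q t y i) x (Pi.single 1 1) = 0)
    (v₀ : (Fin 2 → ℝ) → (Fin 2 → ℝ))
    (hv₀ : ∀ x, v₀ x = fun j => if j = 0 then q 0 x ix else q 0 x iy)
    (x : Fin 2 → ℝ) :
    (fun t : ℝ => q t x - q 0 (x - t • v₀ (x - t • v₀ x)))
      =O[nhdsWithin 0 (Set.Ici 0)] (fun t : ℝ => t ^ 3) := by
  have hv : v₀ = fun z => fun j => if j = 0 then q 0 z ix else q 0 z iy := funext hv₀
  subst hv
  have hQ : ContDiff ℝ (⊤:ℕ∞) (fun p : ℝ × (Fin 2 → ℝ) => q p.1 p.2) := hq.of_le (by simp)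
  have hQi : ∀ i : Fin m, ContDiff ℝ (⊤:ℕ∞) (fun p : ℝ × (Fin 2 → ℝ) => q p.1 p.2 i) :=
    fun i => contDiff_pi.mp hQ i
  have hq0i : ∀ k : Fin m, ContDiff ℝ (⊤:ℕ∞) (fun z : Fin 2 → ℝ => q 0 z k) :=
    fun k => (hQi k).comp (ContDiff.prodMk contDiff_const contDiff_id)
  have hFsm : ∀ k : Fin m, ContDiff ℝ (⊤:ℕ∞) (fun s : ℝ => q s x k) :=
    fun k => (hQi k).comp (ContDiff.prodMk contDiff_id contDiff_const)
  set vf : (Fin 2 → ℝ) → (Fin 2 → ℝ) :=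
    fun z => fun j => if j = 0 then q 0 z ix else q 0 z iy with hvf_def
  have hvf : ContDiff ℝ (⊤:ℕ∞) vf := by
    apply contDiff_pi.mpr
    intro j
    by_cases hj : j = 0
    · simpa [hvf_def, hj] using hq0i ix
    · simpa [hvf_def, hj] using hq0i iy
  have hvfx0 : vf x 0 = q 0 x ix := by simp [hvf_def]
  have hvfx1 : vf x 1 = q 0 x iy := by simp [hvf_def]
  set h : ℝ → (Fin 2 → ℝ) := fun t => x - t • vf (x - t • vf x) with hh_def
  have hhsm : ContDiff ℝ (⊤:ℕ∞) h := by
    rw [hh_def]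
    exact contDiff_const.sub (contDiff_id.smul (hvf.comp
      (contDiff_const.sub (contDiff_id.smul contDiff_const))))
  have h00 : h 0 = x := by simp [hh_def]
  -- derivative facts for the flow map
  have hu : ∀ t : ℝ, HasDerivAt (fun s : ℝ => x - s • vf x) (-(vf x)) t := by
    intro t
    simpa using ((hasDerivAt_id t).smul_const (vf x)).const_sub x
  have hudiff : Differentiable ℝ (fun s : ℝ => x - s • vf x) :=
    fun t => (hu t).differentiableAt
  have hyv : ∀ t : ℝ, HasDerivAt (fun s : ℝ => vf (x - s • vf x))
      (fderiv ℝ vf (x - t • vf x) (-(vf x))) t :=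
    fun t => ((hvf.differentiable adv_one_le_inf _).hasFDerivAt).comp_hasDerivAt t (hu t)
  have hh' : ∀ t : ℝ, HasDerivAt h
      (-(vf (x - t • vf x)) + t • fderiv ℝ vf (x - t • vf x) (vf x)) t := by
    intro t
    have h1 : HasDerivAt (fun s : ℝ => s • vf (x - s • vf x))
        (t • (fderiv ℝ vf (x - t • vf x) (-(vf x))) + (1:ℝ) • vf (x - t • vf x)) t :=
      (hasDerivAt_id t).fun_smul (hyv t)
    have h2 := h1.const_sub x
    rw [hh_def]
    refine h2.congr_deriv ?_
    simp [map_neg, smul_neg]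
  refine isBigO_pi.mpr fun i => ?_
  -- the right-hand side composition and its derivatives
  have hgsm : ContDiff ℝ (⊤:ℕ∞) (fun s : ℝ => q 0 (h s) i) := (hq0i i).comp hhsm
  have hg' : ∀ t : ℝ, HasDerivAt (fun s : ℝ => q 0 (h s) i)
      (fderiv ℝ (fun z : Fin 2 → ℝ => q 0 z i) (h t)
        (-(vf (x - t • vf x)) + t • fderiv ℝ vf (x - t • vf x) (vf x))) t :=
    fun t => ((hq0i i).differentiable adv_one_le_inf _).hasFDerivAt.comp_hasDerivAt t (hh' t)
  have hderivg : deriv (fun s : ℝ => q 0 (h s) i) = fun t =>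
      fderiv ℝ (fun z : Fin 2 → ℝ => q 0 z i) (h t)
        (-(vf (x - t • vf x)) + t • fderiv ℝ vf (x - t • vf x) (vf x)) :=
    funext fun t => (hg' t).deriv
  have hderivg0 : deriv (fun s : ℝ => q 0 (h s) i) 0
      = -(fderiv ℝ (fun z : Fin 2 → ℝ => q 0 z i) x (vf x)) := by
    rw [hderivg]
    simp [h00, map_neg]
  have hPsm : ContDiff ℝ (⊤:ℕ∞) (fderiv ℝ (fun z : Fin 2 → ℝ => q 0 z i)) :=
    (hq0i i).fderiv_right (by norm_num)
  have hPh : HasDerivAt (fun t : ℝ => fderiv ℝ (fun z : Fin 2 → ℝ => q 0 z i) (h t))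
      (fderiv ℝ (fderiv ℝ (fun z : Fin 2 → ℝ => q 0 z i)) x (-(vf x))) 0 := by
    have hc := ((hPsm.differentiable adv_one_le_inf (h 0)).hasFDerivAt).comp_hasDerivAt 0 (hh' 0)
    simpa [Function.comp_def, h00] using hc
  have hMsm : ContDiff ℝ (⊤:ℕ∞) (fderiv ℝ vf) := hvf.fderiv_right (by norm_num)
  have hcdiff : Differentiable ℝ (fun t : ℝ => fderiv ℝ vf (x - t • vf x) (vf x)) :=
    ((hMsm.differentiable adv_one_le_inf).comp hudiff).clm_apply (differentiable_const _)
  have hh1f' : HasDerivAt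
      (fun t : ℝ => -(vf (x - t • vf x)) + t • fderiv ℝ vf (x - t • vf x) (vf x))
      (fderiv ℝ vf x (vf x) + fderiv ℝ vf x (vf x)) 0 := by
    have p1 : HasDerivAt (fun t : ℝ => -(vf (x - t • vf x))) (fderiv ℝ vf x (vf x)) 0 := by
      have hn := (hyv 0).fun_neg
      simpa [map_neg] using hn
    have p2 : HasDerivAt (fun t : ℝ => t • fderiv ℝ vf (x - t • vf x) (vf x))
        (fderiv ℝ vf x (vf x)) 0 := by
      have hs := (hasDerivAt_id (0:ℝ)).fun_smul (hcdiff 0).hasDerivAt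
      simpa using hs
    exact p1.add p2
  have hMx : fderiv ℝ vf x
      = ContinuousLinearMap.pi (fun j : Fin 2 => if j = 0
          then fderiv ℝ (fun z : Fin 2 → ℝ => q 0 z ix) x
          else fderiv ℝ (fun z : Fin 2 → ℝ => q 0 z iy) x) := by
    apply HasFDerivAt.fderiv
    apply hasFDerivAt_pi''
    intro j
    rw [ContinuousLinearMap.proj_pi]
    by_cases hj : j = 0
    · subst hj
      simp only [if_pos]
      have hfun : (fun z => vf z 0) = fun z : Fin 2 → ℝ => q 0 z ix := by
        funext z; simp [hvf_def]
      rw [hfun]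
      exact ((hq0i ix).differentiable adv_one_le_inf x).hasFDerivAt
    · simp only [if_neg hj]
      have hfun : (fun z => vf z j) = fun z : Fin 2 → ℝ => q 0 z iy := by
        funext z; simp [hvf_def, hj]
      rw [hfun]
      exact ((hq0i iy).differentiable adv_one_le_inf x).hasFDerivAt
  have hgd0 : HasDerivAt (deriv (fun s : ℝ => q 0 (h s) i))
      (fderiv ℝ (fderiv ℝ (fun z : Fin 2 → ℝ => q 0 z i)) x (vf x) (vf x)
        + (fderiv ℝ (fun z : Fin 2 → ℝ => q 0 z i) x (fderiv ℝ vf x (vf x))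
          + fderiv ℝ (fun z : Fin 2 → ℝ => q 0 z i) x (fderiv ℝ vf x (vf x)))) 0 := by
    rw [hderivg]
    have hcl := hPh.clm_apply hh1f'
    refine hcl.congr_deriv ?_
    simp [h00, map_neg, map_add, ContinuousLinearMap.neg_apply]
  -- PDE data
  have hpde' : ∀ k : Fin m, ∀ t ∈ Set.Icc (0:ℝ) T, deriv (fun s => q s x k) t
      = -(q t x ix * fderiv ℝ (fun y => q t y k) x (Pi.single 0 1)
          + q t x iy * fderiv ℝ (fun y => q t y k) x (Pi.single 1 1)) := by
    intro k t ht
    have hp := hpde t ht x k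
    linarith
  have hderivF0 : ∀ k : Fin m, deriv (fun s => q s x k) 0
      = -(q 0 x ix * fderiv ℝ (fun y => q 0 y k) x (Pi.single 0 1)
          + q 0 x iy * fderiv ℝ (fun y => q 0 y k) x (Pi.single 1 1)) :=
    fun k => hpde' k 0 ⟨le_rfl, hT.le⟩
  -- first order condition
  have hφ1 : deriv (fun t : ℝ => q t x i - q 0 (h t) i) 0 = 0 := by
    rw [deriv_fun_sub ((hFsm i).differentiable adv_one_le_inf 0)
      (hgsm.differentiable adv_one_le_inf 0)]
    rw [hderivF0 i, hderivg0,
      adv_clm_fin2 (fderiv ℝ (fun z : Fin 2 → ℝ => q 0 z i) x) (vf x), hvfx0, hvfx1]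
    ring
  -- swap of mixed partials
  have hinner : (fun y : Fin 2 → ℝ => deriv (fun s => q s y i) 0)
      = fun y : Fin 2 → ℝ =>
        -(q 0 y ix * fderiv ℝ (fun z : Fin 2 → ℝ => q 0 z i) y (Pi.single 0 1)
          + q 0 y iy * fderiv ℝ (fun z : Fin 2 → ℝ => q 0 z i) y (Pi.single 1 1)) := by
    funext y
    have hp := hpde 0 ⟨le_rfl, hT.le⟩ y i
    linarith
  have hBx : HasDerivAt (fun t => fderiv ℝ (fun y => q t y i) x (Pi.single 0 1))
      (fderiv ℝ (fun y : Fin 2 → ℝ => deriv (fun s => q s y i) 0) x (Pi.single 0 1)) 0 :=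
    adv_swap_lemma' (hQi i) x (Pi.single 0 1)
  have hBy : HasDerivAt (fun t => fderiv ℝ (fun y => q t y i) x (Pi.single 1 1))
      (fderiv ℝ (fun y : Fin 2 → ℝ => deriv (fun s => q s y i) 0) x (Pi.single 1 1)) 0 :=
    adv_swap_lemma' (hQi i) x (Pi.single 1 1)
  rw [hinner] at hBx hBy
  -- compute the spatial derivative of the PDE right-hand side
  have hB0f : HasFDerivAt
      (fun z : Fin 2 → ℝ => fderiv ℝ (fun z' : Fin 2 → ℝ => q 0 z' i) z (Pi.single 0 1))
      ((fderiv ℝ (fderiv ℝ (fun z' : Fin 2 → ℝ => q 0 z' i)) x).flip (Pi.single 0 1)) x := by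
    have hcl := ((hPsm.differentiable adv_one_le_inf x).hasFDerivAt).clm_apply
      (hasFDerivAt_const (Pi.single 0 1 : Fin 2 → ℝ) x)
    simpa using hcl
  have hB1f : HasFDerivAt
      (fun z : Fin 2 → ℝ => fderiv ℝ (fun z' : Fin 2 → ℝ => q 0 z' i) z (Pi.single 1 1))
      ((fderiv ℝ (fderiv ℝ (fun z' : Fin 2 → ℝ => q 0 z' i)) x).flip (Pi.single 1 1)) x := by
    have hcl := ((hPsm.differentiable adv_one_le_inf x).hasFDerivAt).clm_apply
      (hasFDerivAt_const (Pi.single 1 1 : Fin 2 → ℝ) x)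
    simpa using hcl
  have hA0f : HasFDerivAt (fun z : Fin 2 → ℝ => q 0 z ix)
      (fderiv ℝ (fun z : Fin 2 → ℝ => q 0 z ix) x) x :=
    ((hq0i ix).differentiable adv_one_le_inf x).hasFDerivAt
  have hA1f : HasFDerivAt (fun z : Fin 2 → ℝ => q 0 z iy)
      (fderiv ℝ (fun z : Fin 2 → ℝ => q 0 z iy) x) x :=
    ((hq0i iy).differentiable adv_one_le_inf x).hasFDerivAt
  have hRHSf : HasFDerivAt
      (fun y : Fin 2 → ℝ =>
        -(q 0 y ix * fderiv ℝ (fun z : Fin 2 → ℝ => q 0 z i) y (Pi.single 0 1)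
          + q 0 y iy * fderiv ℝ (fun z : Fin 2 → ℝ => q 0 z i) y (Pi.single 1 1)))
      (-((q 0 x ix • ((fderiv ℝ (fderiv ℝ (fun z' : Fin 2 → ℝ => q 0 z' i)) x).flip (Pi.single 0 1))
            + (fderiv ℝ (fun z' : Fin 2 → ℝ => q 0 z' i) x (Pi.single 0 1))
              • fderiv ℝ (fun z : Fin 2 → ℝ => q 0 z ix) x)
        + (q 0 x iy • ((fderiv ℝ (fderiv ℝ (fun z' : Fin 2 → ℝ => q 0 z' i)) x).flip (Pi.single 1 1))
            + (fderiv ℝ (fun z' : Fin 2 → ℝ => q 0 z' i) x (Pi.single 1 1))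
              • fderiv ℝ (fun z : Fin 2 → ℝ => q 0 z iy) x))) x :=
    ((hA0f.mul hB0f).add (hA1f.mul hB1f)).neg
  rw [hRHSf.fderiv] at hBx hBy
  simp only [ContinuousLinearMap.neg_apply, ContinuousLinearMap.add_apply,
    ContinuousLinearMap.smul_apply, ContinuousLinearMap.flip_apply, smul_eq_mul] at hBx hBy
  -- coefficients
  have ha : HasDerivAt (fun t : ℝ => q t x ix) (deriv (fun s : ℝ => q s x ix) 0) 0 :=
    ((hFsm ix).differentiable adv_one_le_inf 0).hasDerivAt
  have hb : HasDerivAt (fun t : ℝ => q t x iy) (deriv (fun s : ℝ => q s x iy) 0) 0 :=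
    ((hFsm iy).differentiable adv_one_le_inf 0).hasDerivAt
  have hG := ((ha.fun_mul hBx).fun_add (hb.fun_mul hBy)).fun_neg
  -- identify the second time-derivative with deriv G 0
  have hdF1sm : ContDiff ℝ (⊤:ℕ∞) (deriv (fun s : ℝ => q s x i)) :=
    (contDiff_infty_iff_deriv.1 (hFsm i)).2
  have hee : deriv (fun s : ℝ => q s x i) =ᶠ[nhdsWithin 0 (Set.Ici 0)]
      (fun t : ℝ => -(q t x ix * fderiv ℝ (fun y => q t y i) x (Pi.single 0 1)
        + q t x iy * fderiv ℝ (fun y => q t y i) x (Pi.single 1 1))) := by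
    filter_upwards [Icc_mem_nhdsGE_of_mem (Set.left_mem_Ico.mpr hT)] with t ht
    exact hpde' i t ht
  have huniq : UniqueDiffWithinAt ℝ (Set.Ici (0:ℝ)) 0 := uniqueDiffOn_Ici 0 0 Set.self_mem_Ici
  have h2F : deriv (deriv (fun s : ℝ => q s x i)) 0
      = deriv (fun t : ℝ => -(q t x ix * fderiv ℝ (fun y => q t y i) x (Pi.single 0 1)
        + q t x iy * fderiv ℝ (fun y => q t y i) x (Pi.single 1 1))) 0 := by
    rw [← (hdF1sm.differentiable adv_one_le_inf 0).derivWithin huniq,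
      hee.derivWithin_eq (hpde' i 0 ⟨le_rfl, hT.le⟩),
      (hG.differentiableAt).derivWithin huniq]
  have hDF : HasDerivAt (deriv (fun s : ℝ => q s x i))
      (deriv (fun t : ℝ => -(q t x ix * fderiv ℝ (fun y => q t y i) x (Pi.single 0 1)
        + q t x iy * fderiv ℝ (fun y => q t y i) x (Pi.single 1 1))) 0) 0 := by
    have hdd := (hdF1sm.differentiable adv_one_le_inf 0).hasDerivAt
    rwa [h2F] at hdd
  rw [hG.deriv] at hDF
  -- second order condition
  have hφd : deriv (fun t : ℝ => q t x i - q 0 (h t) i)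
      = fun t : ℝ => deriv (fun s : ℝ => q s x i) t - deriv (fun s : ℝ => q 0 (h s) i) t :=
    funext fun t => deriv_fun_sub ((hFsm i).differentiable adv_one_le_inf t)
      (hgsm.differentiable adv_one_le_inf t)
  have hsub := hDF.fun_sub hgd0
  have hφ2 : deriv (deriv (fun t : ℝ => q t x i - q 0 (h t) i)) 0 = 0 := by
    rw [hφd, hsub.deriv]
    rw [hderivF0 ix, hderivF0 iy, hMx,
      adv_clm_fin2bi (fderiv ℝ (fderiv ℝ (fun z : Fin 2 → ℝ => q 0 z i)) x) (vf x) (vf x),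
      adv_clm_fin2 (fderiv ℝ (fun z : Fin 2 → ℝ => q 0 z i) x)
        (ContinuousLinearMap.pi (fun j : Fin 2 => if j = 0
          then fderiv ℝ (fun z : Fin 2 → ℝ => q 0 z ix) x
          else fderiv ℝ (fun z : Fin 2 → ℝ => q 0 z iy) x) (vf x))]
    simp only [ContinuousLinearMap.pi_apply, if_pos, if_neg (by decide : ¬(1 : Fin 2) = 0)]
    rw [adv_clm_fin2 (fderiv ℝ (fun z : Fin 2 → ℝ => q 0 z ix) x) (vf x),
      adv_clm_fin2 (fderiv ℝ (fun z : Fin 2 → ℝ => q 0 z iy) x) (vf x),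
      hvfx0, hvfx1]
    ring
  -- conclude
  have hφsm : ContDiff ℝ (⊤:ℕ∞) (fun t : ℝ => q t x i - q 0 (h t) i) := (hFsm i).sub hgsm
  have hφ0 : (fun t : ℝ => q t x i - q 0 (h t) i) 0 = 0 := by simp [h00]
  exact adv_third_order_lemma hφsm hφ0 hφ1 hφ2
end

section
/- Let u solve the Burgers equation ∂_t u + u ∂_x u = 0 with C³ initial data u₀ on a time interval where the solution is smooth. Then u(t, x) = u₀(x − t·u₀(x − t·u₀(x))) + O(t³) as t → 0, pointwise in x. -/
open Real Asymptotics Set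

lemma aux_bigO_cubed (h : ℝ → ℝ) (hh : ContDiff ℝ (⊤:ℕ∞) h) (h0 : h 0 = 0)
    (h1 : deriv h 0 = 0) (h2 : deriv (deriv h) 0 = 0) :
    h =O[nhdsWithin 0 (Set.Ici 0)] (fun t : ℝ => t ^ 3) := by
  have hs : UniqueDiffOn ℝ (Icc (0:ℝ) 1) := uniqueDiffOn_Icc one_pos
  have hmem : (0:ℝ) ∈ Icc (0:ℝ) 1 := ⟨le_refl _, zero_le_one⟩
  have hdiff : Differentiable ℝ h := hh.differentiable (by simp)
  have hdh : ContDiff ℝ (⊤:ℕ∞) (deriv h) := (contDiff_infty_iff_deriv.mp hh).2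
  have hdW : ∀ y ∈ Icc (0:ℝ) 1, derivWithin h (Icc 0 1) y = deriv h y := fun y hy =>
    (hdiff y).derivWithin (hs y hy)
  have hd1 : iteratedDerivWithin 1 h (Icc 0 1) 0 = 0 := by
    rw [iteratedDerivWithin_one, hdW 0 hmem, h1]
  have hd2 : iteratedDerivWithin 2 h (Icc 0 1) 0 = 0 := by
    rw [show (2:ℕ) = 1 + 1 from rfl, iteratedDerivWithin_succ',
      iteratedDerivWithin_one,
      derivWithin_congr hdW (hdW 0 hmem),
      (hdh.differentiable (by simp) 0).derivWithin (hs 0 hmem), h2]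
  have htay : ∀ t : ℝ, taylorWithinEval h 2 (Icc 0 1) 0 t = 0 := by
    intro t
    rw [show (2:ℕ) = 1 + 1 from rfl, taylorWithinEval_succ, taylorWithinEval_succ,
      taylor_within_zero_eval, h0, hd1, hd2]
    simp
  have hC3 : ContDiffOn ℝ ((2:ℕ)+1) h (Icc 0 1) := hh.contDiffOn.of_le (by
    rw [show ((2:ℕ):WithTop ℕ∞) + 1 = (((3:ℕ):ℕ∞):WithTop ℕ∞) by norm_cast]
    exact WithTop.coe_le_coe.mpr le_top)
  obtain ⟨C, hC⟩ := (isCompact_Icc (a := (0:ℝ)) (b := 1)).exists_bound_of_continuousOn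
    (hC3.continuousOn_iteratedDerivWithin (m := 3) (by norm_num) hs)
  rw [Asymptotics.isBigO_iff]
  refine ⟨C / 2, ?_⟩
  filter_upwards [Filter.inter_mem (Icc_mem_nhdsGE one_pos) self_mem_nhdsWithin]
    with t ht
  obtain ⟨htI, ht0⟩ := ht
  have hb := taylor_mean_remainder_bound (n := 2) zero_le_one hC3 htI hC
  rw [htay t, sub_zero, sub_zero] at hb
  norm_num [Nat.factorial] at hb
  have ht0' : (0:ℝ) ≤ t := ht0
  calc ‖h t‖ ≤ C * t ^ 3 / 2 := hb
    _ ≤ C / 2 * ‖t ^ 3‖ := by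
        rw [norm_pow, Real.norm_eq_abs, abs_of_nonneg ht0']
        ring_nf
        exact le_refl _

theorem burgers_iterated_characteristic_third_order
    (T : ℝ) (hT : 0 < T) (u : ℝ → ℝ → ℝ)
    (hu : ContDiff ℝ (⊤ : ℕ∞) (fun p : ℝ × ℝ => u p.1 p.2))
    (hu0 : ContDiff ℝ 3 (u 0))
    (hpde : ∀ t ∈ Set.Icc 0 T, ∀ x : ℝ,
      deriv (fun s => u s x) t + u t x * deriv (u t) x = 0)
    (x : ℝ) :
    (fun t : ℝ => u t x - u 0 (x - t * u 0 (x - t * u 0 x)))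
      =O[nhdsWithin 0 (Set.Ici 0)] (fun t : ℝ => t ^ 3) := by
  have hu' : ContDiff ℝ (⊤:ℕ∞) (fun p : ℝ × ℝ => u p.1 p.2) := hu.of_le (by simp)
  set U : ℝ × ℝ → ℝ := fun p => u p.1 p.2 with hUdef
  have hfd : ContDiff ℝ (⊤:ℕ∞) (fderiv ℝ U) := (contDiff_infty_iff_fderiv.mp hu').2
  set A : ℝ × ℝ → ℝ := fun p => fderiv ℝ U p (1,0) with hAdef
  set B : ℝ × ℝ → ℝ := fun p => fderiv ℝ U p (0,1) with hBdef
  have hA : ContDiff ℝ (⊤:ℕ∞) A := hfd.clm_apply contDiff_const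
  have hB : ContDiff ℝ (⊤:ℕ∞) B := hfd.clm_apply contDiff_const
  have hUd : ∀ p : ℝ × ℝ, HasFDerivAt U (fderiv ℝ U p) p := fun p =>
    (hu'.differentiable (by simp) p).hasFDerivAt
  have hslicet : ∀ t y : ℝ, HasDerivAt (fun s => u s y) (A (t,y)) t := by
    intro t y
    have h1 : HasDerivAt (fun s : ℝ => (s, y)) ((1:ℝ),(0:ℝ)) t :=
      (hasDerivAt_id t).prodMk (hasDerivAt_const t y)
    exact (hUd (t,y)).comp_hasDerivAt t h1
  have hslicex : ∀ t y : ℝ, HasDerivAt (u t) (B (t,y)) y := by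
    intro t y
    have h1 : HasDerivAt (fun s : ℝ => (t, s)) ((0:ℝ),(1:ℝ)) y :=
      (hasDerivAt_const y t).prodMk (hasDerivAt_id y)
    exact (hUd (t,y)).comp_hasDerivAt y h1
  have hAB : ∀ t ∈ Set.Icc 0 T, ∀ y : ℝ, A (t,y) = -(u t y * B (t,y)) := by
    intro t ht y
    have h := hpde t ht y
    rw [(hslicet t y).deriv, (hslicex t y).deriv] at h
    linarith
  -- second derivative and symmetry
  set D2 := fderiv ℝ (fderiv ℝ U) (0, x) with hD2def
  have hD2 : HasFDerivAt (fderiv ℝ U) D2 (0,x) :=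
    (hfd.differentiable (by simp) _).hasFDerivAt
  have hsymm : D2 (1,0) (0,1) = D2 (0,1) (1,0) :=
    second_derivative_symmetric (fun p => hUd p) hD2 _ _
  have hBt : HasDerivAt (fun t => B (t,x)) (D2 (1,0) (0,1)) 0 := by
    have h1 : HasDerivAt (fun s : ℝ => (s, x)) ((1:ℝ),(0:ℝ)) 0 :=
      (hasDerivAt_id 0).prodMk (hasDerivAt_const 0 x)
    have h2 : HasDerivAt (fun t : ℝ => fderiv ℝ U (t, x)) (D2 (1,0)) 0 :=
      hD2.comp_hasDerivAt 0 h1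
    have h3 := h2.clm_apply (hasDerivAt_const 0 ((0:ℝ),(1:ℝ)))
    simpa using h3
  have hAx : HasDerivAt (fun y => A (0,y)) (D2 (0,1) (1,0)) x := by
    have h1 : HasDerivAt (fun s : ℝ => ((0:ℝ), s)) ((0:ℝ),(1:ℝ)) x :=
      (hasDerivAt_const x (0:ℝ)).prodMk (hasDerivAt_id x)
    have h2 : HasDerivAt (fun y : ℝ => fderiv ℝ U (0, y)) (D2 (0,1)) x :=
      hD2.comp_hasDerivAt x h1
    have h3 := h2.clm_apply (hasDerivAt_const x ((1:ℝ),(0:ℝ)))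
    simpa using h3
  -- values at t = 0
  have hmem0 : (0:ℝ) ∈ Set.Icc 0 T := ⟨le_refl _, hT.le⟩
  have hu0' : ContDiff ℝ (⊤:ℕ∞) (u 0) := hu'.comp (contDiff_const.prodMk contDiff_id)
  have hu0diff : Differentiable ℝ (u 0) := hu0'.differentiable (by simp)
  have hdu0 : ContDiff ℝ (⊤:ℕ∞) (deriv (u 0)) := (contDiff_infty_iff_deriv.mp hu0').2
  have hddiff : Differentiable ℝ (deriv (u 0)) := hdu0.differentiable (by simp)
  have hB0 : ∀ y : ℝ, B (0,y) = deriv (u 0) y := fun y => ((hslicex 0 y).deriv).symm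
  have hfunA : (fun y => A (0,y)) = (fun y => -(u 0 y * deriv (u 0) y)) :=
    funext fun y => by rw [hAB 0 hmem0 y, hB0 y]
  have h4 : HasDerivAt (fun y => -(u 0 y * deriv (u 0) y))
      (-(deriv (u 0) x * deriv (u 0) x + u 0 x * deriv (deriv (u 0)) x)) x :=
    ((hu0diff x).hasDerivAt.mul ((hddiff x).hasDerivAt)).neg
  have hmix : D2 (0,1) (1,0)
      = -(deriv (u 0) x * deriv (u 0) x + u 0 x * deriv (deriv (u 0)) x) := by
    rw [← hAx.deriv, hfunA]; exact h4.deriv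
  -- second time derivative via derivWithin on Icc 0 T
  have hr : HasDerivAt (fun t => -(u t x * B (t,x)))
      (-(A (0,x) * B (0,x) + u 0 x * D2 (1,0) (0,1))) 0 := ((hslicet 0 x).mul hBt).neg
  have hAline : ContDiff ℝ (⊤:ℕ∞) (fun t => A (t,x)) :=
    hA.comp (contDiff_id.prodMk contDiff_const)
  have hQ : UniqueDiffWithinAt ℝ (Set.Icc 0 T) 0 := (uniqueDiffOn_Icc hT) 0 hmem0
  have e1 : deriv (fun t => A (t,x)) 0
      = -(A (0,x) * B (0,x) + u 0 x * D2 (1,0) (0,1)) := by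
    rw [← (hAline.differentiable (by simp) 0).derivWithin hQ,
      derivWithin_congr (fun s hs => hAB s hs x) (hAB 0 hmem0 x),
      hr.differentiableAt.derivWithin hQ, hr.deriv]
  have hderF : deriv (fun s => u s x) = fun t => A (t,x) :=
    funext fun t => (hslicet t x).deriv
  -- final values for the F side
  have hF1 : deriv (fun s => u s x) 0 = -(u 0 x * deriv (u 0) x) := by
    rw [(hslicet 0 x).deriv, hAB 0 hmem0 x, hB0 x]
  have hF2 : deriv (deriv (fun s => u s x)) 0
      = 2 * u 0 x * deriv (u 0) x ^ 2 + u 0 x ^ 2 * deriv (deriv (u 0)) x := by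
    rw [hderF, e1, hsymm, hmix, hAB 0 hmem0 x, hB0 x]
    ring
  -- g side
  have hinner : ∀ t : ℝ, HasDerivAt (fun t : ℝ => x - t * u 0 x) (-(1 * u 0 x)) t :=
    fun t => ((hasDerivAt_id t).mul_const (u 0 x)).const_sub x
  have hw : ∀ t : ℝ, HasDerivAt (fun t : ℝ => u 0 (x - t * u 0 x))
      (deriv (u 0) (x - t * u 0 x) * -(1 * u 0 x)) t :=
    fun t => (hu0diff _).hasDerivAt.comp t (hinner t)
  have hy : ∀ t : ℝ, HasDerivAt (fun t : ℝ => x - t * u 0 (x - t * u 0 x))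
      (-(1 * u 0 (x - t * u 0 x) + t * (deriv (u 0) (x - t * u 0 x) * -(1 * u 0 x)))) t :=
    fun t => ((hasDerivAt_id t).mul (hw t)).const_sub x
  have hg : ∀ t : ℝ, HasDerivAt (fun t : ℝ => u 0 (x - t * u 0 (x - t * u 0 x)))
      (deriv (u 0) (x - t * u 0 (x - t * u 0 x)) *
        -(1 * u 0 (x - t * u 0 x) + t * (deriv (u 0) (x - t * u 0 x) * -(1 * u 0 x)))) t :=
    fun t => (hu0diff _).hasDerivAt.comp t (hy t)
  have hderg : deriv (fun t : ℝ => u 0 (x - t * u 0 (x - t * u 0 x)))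
      = fun t : ℝ => deriv (u 0) (x - t * u 0 (x - t * u 0 x)) *
        -(1 * u 0 (x - t * u 0 x) + t * (deriv (u 0) (x - t * u 0 x) * -(1 * u 0 x))) :=
    funext fun t => (hg t).deriv
  have hW0 : HasDerivAt (fun t : ℝ => deriv (u 0) (x - t * u 0 x) * -(1 * u 0 x))
      ((deriv (deriv (u 0)) (x - 0 * u 0 x) * -(1 * u 0 x)) * -(1 * u 0 x)) 0 :=
    ((hddiff _).hasDerivAt.comp 0 (hinner 0)).mul_const _
  have hp1 : HasDerivAt (fun t : ℝ => deriv (u 0) (x - t * u 0 (x - t * u 0 x)))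
      (deriv (deriv (u 0)) (x - 0 * u 0 (x - 0 * u 0 x)) *
        -(1 * u 0 (x - 0 * u 0 x) + 0 * (deriv (u 0) (x - 0 * u 0 x) * -(1 * u 0 x)))) 0 :=
    (hddiff _).hasDerivAt.comp 0 (hy 0)
  have hp2 : HasDerivAt (fun t : ℝ =>
      -(1 * u 0 (x - t * u 0 x) + t * (deriv (u 0) (x - t * u 0 x) * -(1 * u 0 x))))
      (-(1 * (deriv (u 0) (x - 0 * u 0 x) * -(1 * u 0 x)) +
        (1 * ((fun t : ℝ => deriv (u 0) (x - t * u 0 x) * -(1 * u 0 x)) 0) +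
          0 * ((deriv (deriv (u 0)) (x - 0 * u 0 x) * -(1 * u 0 x)) * -(1 * u 0 x))))) 0 :=
    ((HasDerivAt.const_mul 1 (hw 0)).add ((hasDerivAt_id 0).mul hW0)).neg
  have hG0 := hp1.mul hp2
  have hg2 : deriv (deriv (fun t : ℝ => u 0 (x - t * u 0 (x - t * u 0 x)))) 0
      = 2 * u 0 x * deriv (u 0) x ^ 2 + u 0 x ^ 2 * deriv (deriv (u 0)) x := by
    rw [hderg]; refine hG0.deriv.trans ?_
    simp only [zero_mul, sub_zero, mul_zero, add_zero, one_mul]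
    ring
  -- assemble
  have hFsm : ContDiff ℝ (⊤:ℕ∞) (fun t : ℝ => u t x) :=
    hu'.comp (contDiff_id.prodMk contDiff_const)
  have hwsm : ContDiff ℝ (⊤:ℕ∞) (fun t : ℝ => u 0 (x - t * u 0 x)) :=
    hu0'.comp (contDiff_const.sub (contDiff_id.mul contDiff_const))
  have hgsm : ContDiff ℝ (⊤:ℕ∞) (fun t : ℝ => u 0 (x - t * u 0 (x - t * u 0 x))) :=
    hu0'.comp (contDiff_const.sub (contDiff_id.mul hwsm))
  apply aux_bigO_cubed _ (hFsm.sub hgsm)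
  · simp
  · have e : deriv (fun t : ℝ => u t x - u 0 (x - t * u 0 (x - t * u 0 x))) 0
        = deriv (fun s : ℝ => u s x) 0
          - deriv (fun t : ℝ => u 0 (x - t * u 0 (x - t * u 0 x))) 0 :=
      deriv_sub (hslicet 0 x).differentiableAt (hg 0).differentiableAt
    rw [e, hF1, (hg 0).deriv]
    simp
    ring
  · have e : deriv (fun t : ℝ => u t x - u 0 (x - t * u 0 (x - t * u 0 x)))
        = fun t : ℝ => deriv (fun s : ℝ => u s x) t
          - deriv (fun t : ℝ => u 0 (x - t * u 0 (x - t * u 0 x))) t :=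
      funext fun t => deriv_sub (hslicet t x).differentiableAt (hg t).differentiableAt
    rw [e]
    have e2 : deriv (fun t : ℝ => deriv (fun s : ℝ => u s x) t
          - deriv (fun t : ℝ => u 0 (x - t * u 0 (x - t * u 0 x))) t) 0
        = deriv (deriv (fun s : ℝ => u s x)) 0
          - deriv (deriv (fun t : ℝ => u 0 (x - t * u 0 (x - t * u 0 x)))) 0 := by
      apply deriv_sub
      · rw [hderF]; exact (hAline.differentiable (by simp) 0)
      · rw [hderg]; exact hG0.differentiableAt
    rw [e2, hF2, hg2]
    ring
end
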